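/- Let σ, ξ > 0 and let p^ξ solve p^ξ'(t) = σ l(t) − ξ p^ξ(t), p^ξ(0) = p₀ ≥ 0, with l : [0,T] → ℝ continuous and square-integrable. Then (1/ξ)·(p^ξ(T))² + ∫₀ᵀ (p^ξ(t))² dt ≤ (1/ξ) p₀² + (σ²/ξ²) ∫₀ᵀ l(t)² dt. In particular ∫₀ᵀ (p^ξ)² dt = O(1/ξ) as ξ → ∞ if ∫₀ᵀ l² dt is bounded uniformly in ξ. -/

import Mathlib

/-! Along `p' = g - ξ p` we have `(p²)' = 2 p g - 2 ξ p² ≤ g² / ξ - ξ p²`, by Young's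
inequality `2 p g ≤ ξ p² + g² / ξ`. Integrating over `[0, T]` and dividing by `ξ` gives the
estimate with `g = σ l`. -/

open Set MeasureTheory intervalIntegral

lemma two_mul_mul_sub_mul_le {ξ : ℝ} (hξ : 0 < ξ) (x y : ℝ) :
    2 * x * (y - ξ * x) ≤ y ^ 2 / ξ - ξ * x ^ 2 := by
  have gap : y ^ 2 / ξ - ξ * x ^ 2 - 2 * x * (y - ξ * x) = (y - ξ * x) ^ 2 / ξ := by
    field_simp
    ring
  have gap_nonneg : 0 ≤ (y - ξ * x) ^ 2 / ξ := by positivity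
  linarith

theorem sq_add_mul_integral_sq_le_of_hasDerivAt {a b ξ : ℝ} {p g : ℝ → ℝ} (hab : a ≤ b)
    (hξ : 0 < ξ) (hg : ContinuousOn g (Icc a b))
    (hp : ∀ t ∈ Icc a b, HasDerivAt p (g t - ξ * p t) t) :
    p b ^ 2 + ξ * ∫ t in a..b, p t ^ 2 ≤ p a ^ 2 + (1 / ξ) * ∫ t in a..b, g t ^ 2 := by
  have hpc : ContinuousOn p (Icc a b) := fun t ht => (hp t ht).continuousAt.continuousWithinAt
  have hderiv :
      ∀ t ∈ uIcc a b, HasDerivAt (fun s => p s ^ 2) (2 * p t * (g t - ξ * p t)) t := by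
    intro t ht
    rw [uIcc_of_le hab] at ht
    simpa using (hp t ht).fun_pow 2
  have hintegrable :
      ∀ {f : ℝ → ℝ}, ContinuousOn f (Icc a b) → IntervalIntegrable f volume a b :=
    fun hf => (uIcc_of_le hab ▸ hf).intervalIntegrable
  have hp2 : IntervalIntegrable (fun t => p t ^ 2) volume a b := hintegrable (hpc.pow 2)
  have hg2 : IntervalIntegrable (fun t => g t ^ 2) volume a b := hintegrable (hg.pow 2)
  have hderiv_int : IntervalIntegrable (fun t => 2 * p t * (g t - ξ * p t)) volume a b :=
    hintegrable ((continuousOn_const.mul hpc).mul (hg.sub (continuousOn_const.mul hpc)))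
  have ftc : ∫ t in a..b, 2 * p t * (g t - ξ * p t) = p b ^ 2 - p a ^ 2 :=
    integral_eq_sub_of_hasDerivAt hderiv hderiv_int
  have young :
      ∫ t in a..b, 2 * p t * (g t - ξ * p t) ≤ ∫ t in a..b, (g t ^ 2 / ξ - ξ * p t ^ 2) :=
    integral_mono_on hab hderiv_int (hg2.div_const ξ |>.sub (hp2.const_mul ξ))
      fun t _ => two_mul_mul_sub_mul_le hξ (p t) (g t)
  rw [ftc, intervalIntegral.integral_sub (hg2.div_const ξ) (hp2.const_mul ξ),
    intervalIntegral.integral_div, intervalIntegral.integral_const_mul] at young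
  rw [one_div_mul_eq_div]
  linarith

theorem stmt_5_general (σ ξ p₀ T : ℝ) (hξ : 0 < ξ) (hT : 0 < T)
    (l p : ℝ → ℝ) (hl : Continuous l)
    (hp : ∀ t, HasDerivAt p (σ * l t - ξ * p t) t)
    (hinit : p 0 = p₀) :
    (1 / ξ) * (p T) ^ 2 + ∫ t in (0:ℝ)..T, (p t) ^ 2
      ≤ (1 / ξ) * p₀ ^ 2 + (σ ^ 2 / ξ ^ 2) * ∫ t in (0:ℝ)..T, (l t) ^ 2 := by
  have energy := sq_add_mul_integral_sq_le_of_hasDerivAt (g := fun t => σ * l t) hT.le hξ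
    (by fun_prop) fun t _ => hp t
  simp only [mul_pow, intervalIntegral.integral_const_mul, hinit] at energy
  calc (1 / ξ) * p T ^ 2 + ∫ t in (0:ℝ)..T, p t ^ 2
      = (1 / ξ) * (p T ^ 2 + ξ * ∫ t in (0:ℝ)..T, p t ^ 2) := by field_simp
    _ ≤ (1 / ξ) * (p₀ ^ 2 + (1 / ξ) * (σ ^ 2 * ∫ t in (0:ℝ)..T, l t ^ 2)) := by gcongr
    _ = (1 / ξ) * p₀ ^ 2 + (σ ^ 2 / ξ ^ 2) * ∫ t in (0:ℝ)..T, l t ^ 2 := by ring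

/-- Energy-type estimate for the fast species:
`(1/ξ) p(T)² + ∫₀ᵀ p² ≤ (1/ξ) p₀² + (σ²/ξ²) ∫₀ᵀ l²`. -/
theorem stmt_5 (σ ξ p₀ T : ℝ) (hσ : 0 < σ) (hξ : 0 < ξ) (hp0 : 0 ≤ p₀) (hT : 0 < T)
    (l p : ℝ → ℝ) (hl : Continuous l)
    (hp : ∀ t, HasDerivAt p (σ * l t - ξ * p t) t)
    (hinit : p 0 = p₀) :
    (1 / ξ) * (p T) ^ 2 + ∫ t in (0:ℝ)..T, (p t) ^ 2
      ≤ (1 / ξ) * p₀ ^ 2 + (σ ^ 2 / ξ ^ 2) * ∫ t in (0:ℝ)..T, (l t) ^ 2 :=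
  stmt_5_general σ ξ p₀ T hξ hT l p hl hp hinit
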